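/- Let S ⊆ ℝ be measurable with γ_S(t) > 0 for all t. Then the function t ↦ μ_t is differentiable and (d/dt) μ_t = Var(Z_t) for every t ∈ ℝ. -/

import Mathlib

open MeasureTheory ProbabilityTheory Real Filter Topology

noncomputable section

/-- Euclidean dot product on `Fin n → ℝ`. -/
def dot {n : ℕ} (a b : Fin n → ℝ) : ℝ := ∑ i, a i * b i

/-- Euclidean (ℓ²) norm on `Fin n → ℝ`. -/
def norm2 {n : ℕ} (v : Fin n → ℝ) : ℝ := Real.sqrt (∑ i, (v i) ^ 2)

/-- ℓ¹ norm on `Fin n → ℝ`. -/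
def norm1 {n : ℕ} (v : Fin n → ℝ) : ℝ := ∑ i, |v i|

/-- Support of a vector, as a finset. -/
def spt {n : ℕ} (v : Fin n → ℝ) : Finset (Fin n) := Finset.univ.filter fun i => v i ≠ 0

/-- Standard Gaussian measure `N(0, I_n)` on `Fin n → ℝ`. -/
def stdGaussianPi (n : ℕ) : Measure (Fin n → ℝ) := Measure.pi fun _ => gaussianReal 0 1

/-- Survival probability `γ_S(t) = Pr[Z + t ∈ S]`, `Z ~ N(0,1)`. -/
def gammaS (S : Set ℝ) (t : ℝ) : ℝ := (gaussianReal t 1 S).toReal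

/-- Truncated normal `N(t, 1; S)`. -/
def truncNormal (S : Set ℝ) (t : ℝ) : Measure ℝ := (gaussianReal t 1)[|S]

/-- `μ_t`, the mean of `N(t,1;S)`. -/
def truncMean (S : Set ℝ) (t : ℝ) : ℝ := ∫ z, z ∂(truncNormal S t)

/-- `Var(Z_t)`, the variance of `N(t,1;S)`. -/
def truncVar (S : Set ℝ) (t : ℝ) : ℝ := variance id (truncNormal S t)

/-- Constant survival probability assumption: `E_{a ~ N(0,I_n)}[γ_S(aᵀ x*)] ≥ α`. -/
def CSP (n : ℕ) (xstar : Fin n → ℝ) (S : Set ℝ) (α : ℝ) : Prop :=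
  α ≤ ∫ a, gammaS S (dot a xstar) ∂(stdGaussianPi n)

/-- `m` i.i.d. untruncated samples `(a_j, η_j)`, `a_j ~ N(0,I_n)`, `η_j ~ N(0,1)`. -/
def rawMeasure (m n : ℕ) : Measure (Fin m → (Fin n → ℝ) × ℝ) :=
  Measure.pi fun _ => (stdGaussianPi n).prod (gaussianReal 0 1)

/-- The law of `m` truncated samples: condition the `m` i.i.d. pairs `(a_j, η_j)` on all
responses `a_jᵀ x* + η_j` lying in `S`.  (Equivalently, each sample is i.i.d. from the
law of `(a, aᵀx* + η)` conditioned on `aᵀx* + η ∈ S`.) -/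
def dataMeasure (m n : ℕ) (xstar : Fin n → ℝ) (S : Set ℝ) :
    Measure (Fin m → (Fin n → ℝ) × ℝ) :=
  (rawMeasure m n)[|{ω | ∀ j, dot (ω j).1 xstar + (ω j).2 ∈ S}]

/-- The design matrix `A` (rows `A_j`) of a data set. -/
def mat {m n : ℕ} (ω : Fin m → (Fin n → ℝ) × ℝ) : Fin m → Fin n → ℝ := fun j => (ω j).1

/-- The response vector `y`, `y_j = A_jᵀ x* + η_j`. -/
def yvec {m n : ℕ} (xstar : Fin n → ℝ) (ω : Fin m → (Fin n → ℝ) × ℝ) : Fin m → ℝ :=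
  fun j => dot (ω j).1 xstar + (ω j).2

/-- Truncated negative log-likelihood. -/
def nll (S : Set ℝ) {m n : ℕ} (A : Fin m → Fin n → ℝ) (y : Fin m → ℝ) (x : Fin n → ℝ) : ℝ :=
  (1 / (m : ℝ)) * ∑ j, ((dot (A j) x - y j) ^ 2 / 2
    + Real.log (∫ z in S, Real.exp (-(dot (A j) x - z) ^ 2 / 2)))

/-!
Conditioning on `S` commutes with exponential tilting, and tilting `N(0,1)` by `z ↦ e^{tz}`
gives `N(t,1)`. Hence `N(t,1;S)` is the tilt by `z ↦ e^{tz}` of the fixed measure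
`N(0,1)` restricted to `S`: the truncated normals form an exponential family with natural
parameter `t`. Its mean and variance are then the first two derivatives of the cumulant generating
function `t ↦ log ∫_S e^{tz} dN(0,1)(z)`, which is analytic on all of `ℝ` because Gaussian
exponential moments are finite.
-/

open scoped NNReal

section Tilted

variable {α : Type*} {mα : MeasurableSpace α}

lemma tilted_dirac [MeasurableSingletonClass α] (a : α) (f : α → ℝ) :
    (Measure.dirac a).tilted f = Measure.dirac a := by
  classical
  ext s hs
  rw [tilted_apply' _ _ hs, setLIntegral_dirac]
  split_ifs <;> simp [*]

lemma tilted_restrict_eq_cond {μ : Measure α} [SFinite μ] {f : α → ℝ}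
    (hf : Integrable (fun x ↦ exp (f x)) μ) (s : Set α) :
    (μ.restrict s).tilted f = (μ.tilted f)[|s] := by
  rcases eq_zero_or_neZero (μ.restrict s) with hs | hs
  · rw [hs, tilted_zero_measure, cond_eq_zero_of_meas_eq_zero
      (tilted_absolutelyContinuous μ f (Measure.restrict_eq_zero.mp hs))]
  have hZs : 0 < ∫ x in s, exp (f x) ∂μ := integral_exp_pos hf.restrict
  have hZ : 0 < ∫ x, exp (f x) ∂μ := by
    have : NeZero μ := ⟨fun h ↦ hs.out (by simp [h])⟩
    exact integral_exp_pos hf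
  ext A hA
  rw [cond_apply' hA, tilted_apply_eq_ofReal_integral' _ hA, tilted_apply_eq_ofReal_integral,
    tilted_apply_eq_ofReal_integral, Measure.restrict_restrict hA, integral_div, integral_div,
    integral_div, ← ENNReal.ofReal_inv_of_pos (by positivity), ← ENNReal.ofReal_mul (by positivity),
    Set.inter_comm]
  congr 1
  field_simp

end Tilted

lemma gaussianReal_tilted_mul (μ : ℝ) (v : ℝ≥0) (t : ℝ) :
    (gaussianReal μ v).tilted (t * ·) = gaussianReal (μ + v * t) v := by
  rcases eq_or_ne v 0 with rfl | hv
  · simp [tilted_dirac]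
  have hZ : ∫ x, exp (t * x) ∂gaussianReal μ v = exp (μ * t + v * t ^ 2 / 2) :=
    congrFun mgf_id_gaussianReal t
  rw [Measure.tilted, hZ, gaussianReal_of_var_ne_zero _ hv, gaussianReal_of_var_ne_zero _ hv,
    ← withDensity_mul _ (measurable_gaussianPDF _ _) (by fun_prop)]
  congr with x
  simp only [gaussianPDF, gaussianPDFReal, Pi.mul_apply]
  rw [← ENNReal.ofReal_mul (by positivity), mul_assoc, ← exp_sub, ← exp_add]
  congr 3
  field_simp
  ring

lemma integrableExpSet_id_restrict_gaussianReal (μ : ℝ) (v : ℝ≥0) (S : Set ℝ) :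
    integrableExpSet id ((gaussianReal μ v).restrict S) = Set.univ :=
  Set.eq_univ_of_forall fun t ↦ (integrable_exp_mul_gaussianReal t).restrict

lemma truncNormal_eq_tilted (S : Set ℝ) (t : ℝ) :
    truncNormal S t = ((gaussianReal 0 1).restrict S).tilted (t * ·) := by
  rw [tilted_restrict_eq_cond (integrable_exp_mul_gaussianReal t), gaussianReal_tilted_mul]
  simp [truncNormal]

theorem truncMean_hasDerivAt_general (S : Set ℝ) (t : ℝ) :
    HasDerivAt (truncMean S) (truncVar S t) t := by
  set cgfS := cgf id ((gaussianReal 0 1).restrict S)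
  have hint (s : ℝ) : s ∈ interior (integrableExpSet id ((gaussianReal 0 1).restrict S)) := by
    simp [integrableExpSet_id_restrict_gaussianReal]
  have hmean : truncMean S = deriv cgfS := by
    ext s
    rw [truncMean, truncNormal_eq_tilted, ← integral_tilted_mul_self (hint s)]
    rfl
  have hvar : truncVar S t = deriv (deriv cgfS) t := by
    rw [truncVar, truncNormal_eq_tilted]
    exact (variance_tilted_mul (hint t)).trans (by rw [iteratedDeriv_succ, iteratedDeriv_one])
  rw [hmean, hvar]
  exact (analyticAt_cgf (hint t)).deriv.differentiableAt.hasDerivAt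

/-- the derivative of the truncated mean is the truncated variance
(Lemma `derivative`). -/
theorem truncMean_hasDerivAt (S : Set ℝ) (hS : MeasurableSet S)
    (hpos : ∀ t : ℝ, 0 < gammaS S t) (t : ℝ) :
    HasDerivAt (truncMean S) (truncVar S t) t :=
  truncMean_hasDerivAt_general S t
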